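/- arXiv:1710.09899 — 2 statements merged into one kernel-verified Lean document; each statement's English description precedes it below -/
import Mathlib

section
/- Let R be a ring and (C, W) a complete hereditary cotorsion pair on R-Mod in which C ∩ W is the class of projective modules. If M ∈ C, then M is Gorenstein AC-projective, i.e., M admits an exact complex of projectives ⋯ → P_1 → P_0 → P^0 → P^1 → ⋯ with M = ker(P^0 → P^1) that stays exact under Hom_R(−, L) for every level module L, provided all level modules lie in W. -/
open CategoryTheory Limits

noncomputable section
universe u
variable (R : Type u) [Ring R]

/-- The `n`-th Ext group of `X` and `Y` (as an abelian group / ℤ-module). -/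
abbrev extGrp (n : ℕ) (X Y : ModuleCat.{u} R) : Type u :=
  ((Ext ℤ (ModuleCat.{u} R) n).obj (Opposite.op X)).obj Y

/-- `Ext^n_R(X, Y) = 0`. -/
def extVanish (n : ℕ) (X Y : ModuleCat.{u} R) : Prop := Subsingleton (extGrp R n X Y)

/-- `F` admits a projective resolution by finitely generated projective modules. -/
def IsFPinf (F : ModuleCat.{u} R) : Prop :=
  ∃ P : CategoryTheory.ProjectiveResolution F, ∀ n, Module.Finite R (P.complex.X n)

/-- Absolutely clean module. -/
def IsAbsClean (A : ModuleCat.{u} R) : Prop := ∀ F, IsFPinf R F → extVanish R 1 F A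

/-- The right `R`-module structure on the character module of a left `R`-module. -/
instance charModuleOp (M : Type u) [AddCommGroup M] [Module R M] :
    Module Rᵐᵒᵖ (CharacterModule M) where
  smul r c := c.comp (DistribMulAction.toAddMonoidHom M r.unop)
  one_smul c := AddMonoidHom.ext fun x => by
    show c ((1 : Rᵐᵒᵖ).unop • x) = c x; simp
  mul_smul a b c := AddMonoidHom.ext fun x => by
    show c ((a * b).unop • x) = c (b.unop • a.unop • x)
    rw [MulOpposite.unop_mul, mul_smul]
  smul_zero r := AddMonoidHom.ext fun _ => rfl
  smul_add r c d := AddMonoidHom.ext fun _ => rfl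
  add_smul a b c := AddMonoidHom.ext fun x => by
    show c ((a + b).unop • x) = c (a.unop • x) + c (b.unop • x)
    rw [MulOpposite.unop_add, add_smul, map_add]
  zero_smul c := AddMonoidHom.ext fun x => by
    show c ((0 : Rᵐᵒᵖ).unop • x) = 0; simp

/-- The character module of a left module, as a right module. -/
def charMod (M : ModuleCat.{u} R) : ModuleCat.{u} Rᵐᵒᵖ :=
  ModuleCat.of Rᵐᵒᵖ (CharacterModule M)

/-- `Tor^R_n(F, M) = 0` for a right module `F` and left module `M`, encoded through the
natural isomorphism `Tor_n(F,M)⁺ ≅ Ext^n(F, M⁺)` and the fact that `ℚ/ℤ` is an injective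
cogenerator of abelian groups. -/
def torVanish (n : ℕ) (F : ModuleCat.{u} Rᵐᵒᵖ) (M : ModuleCat.{u} R) : Prop :=
  extVanish Rᵐᵒᵖ n F (charMod R M)

/-- Level module. -/
def IsLevel (L : ModuleCat.{u} R) : Prop :=
  ∀ F : ModuleCat.{u} Rᵐᵒᵖ, IsFPinf Rᵐᵒᵖ F → torVanish R 1 F L

/-- `M` admits a resolution `0 → C_n → ⋯ → C_0 → M → 0` with all terms in `P`. -/
def HasResLen (P : ModuleCat.{u} R → Prop) (n : ℕ) (M : ModuleCat.{u} R) : Prop :=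
  ∃ (C : ChainComplex (ModuleCat.{u} R) ℕ)
    (π : C ⟶ (ChainComplex.single₀ (ModuleCat.{u} R)).obj M),
    QuasiIso π ∧ (∀ i ≤ n, P (C.X i)) ∧ ∀ i, n < i → IsZero (C.X i)

/-- `M` admits a coresolution `0 → M → C^0 → ⋯ → C^n → 0` with all terms in `P`. -/
def HasCoresLen (P : ModuleCat.{u} R → Prop) (n : ℕ) (M : ModuleCat.{u} R) : Prop :=
  ∃ (C : CochainComplex (ModuleCat.{u} R) ℕ)
    (ι : (CochainComplex.single₀ (ModuleCat.{u} R)).obj M ⟶ C),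
    QuasiIso ι ∧ (∀ i ≤ n, P (C.X i)) ∧ ∀ i, n < i → IsZero (C.X i)

/-- Level dimension. -/
def ld (M : ModuleCat.{u} R) : ℕ∞ :=
  sInf {n : ℕ∞ | ∃ m : ℕ, n = m ∧ HasResLen R (IsLevel R) m M}

/-- Absolutely clean dimension. -/
def ad (M : ModuleCat.{u} R) : ℕ∞ :=
  sInf {n : ℕ∞ | ∃ m : ℕ, n = m ∧ HasCoresLen R (IsAbsClean R) m M}

/-- AC-Gorenstein ring with (bound on the) dimension `d`: every level left or right module
has absolutely clean dimension at most `d` and every absolutely clean left or right module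
has level dimension at most `d`. -/
def IsACGor (d : ℕ) : Prop :=
  (∀ L : ModuleCat.{u} R, IsLevel R L → ad R L ≤ d) ∧
  (∀ L : ModuleCat.{u} Rᵐᵒᵖ, IsLevel Rᵐᵒᵖ L → ad Rᵐᵒᵖ L ≤ d) ∧
  (∀ A : ModuleCat.{u} R, IsAbsClean R A → ld R A ≤ d) ∧
  (∀ A : ModuleCat.{u} Rᵐᵒᵖ, IsAbsClean Rᵐᵒᵖ A → ld Rᵐᵒᵖ A ≤ d)

/-- Gorenstein AC-projective module. -/
def IsGorACProj (M : ModuleCat.{u} R) : Prop :=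
  ∃ C : CochainComplex (ModuleCat.{u} R) ℤ,
    (∀ n, Projective (C.X n)) ∧ (∀ n, C.ExactAt n) ∧
    (∀ L, IsLevel R L → ∀ (n : ℤ) (f : C.X n ⟶ L), C.d (n-1) n ≫ f = 0 →
      ∃ g : C.X (n+1) ⟶ L, f = C.d n (n+1) ≫ g) ∧
    Nonempty (M ≅ kernel (C.d 0 1))

/-- Gorenstein AC-injective module. -/
def IsGorACInj (M : ModuleCat.{u} R) : Prop :=
  ∃ C : CochainComplex (ModuleCat.{u} R) ℤ,
    (∀ n, Injective (C.X n)) ∧ (∀ n, C.ExactAt n) ∧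
    (∀ A, IsAbsClean R A → ∀ (n : ℤ) (f : A ⟶ C.X n), f ≫ C.d n (n+1) = 0 →
      ∃ g : A ⟶ C.X (n-1), f = g ≫ C.d (n-1) n) ∧
    Nonempty (M ≅ kernel (C.d 0 1))


/-!
Splice a projective resolution `P` of `M` with the coresolution obtained by iterating the
completeness of `(𝒞, 𝒲)`: short exact sequences `0 → Kⁿ → Wⁿ → Kⁿ⁺¹ → 0` with `K⁰ = M`,
`Wⁿ ∈ 𝒲` and `Kⁿ⁺¹ ∈ 𝒞`. Each `Wⁿ` is an extension of modules in `𝒞`, so it lies in `𝒞 ∩ 𝒲`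
and is projective. For a level module `L ∈ 𝒲`, `Hom(-, L)` stays exact in degrees `≥ -1` because
`Ext¹(Kⁿ⁺¹, L) = 0` lets maps `Kⁿ → L` extend along `Kⁿ → Wⁿ`, and in degrees `≤ -2` because
`P` computes `Ext^{≥ 1}(M, L) = 0`.
-/

namespace CategoryTheory

universe v t

variable {C : Type*} [Category.{v} C] [Abelian C]

lemma ShortComplex.Exact.epi_comp_comp_mono {X₀ X₁ X₂ X₃ X₄ : C} {f : X₁ ⟶ X₂} {g : X₂ ⟶ X₃}
    {w : f ≫ g = 0} (hS : (ShortComplex.mk f g w).Exact) (e : X₀ ⟶ X₁) [he : Epi e]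
    (m : X₃ ⟶ X₄) [hm : Mono m] :
    (ShortComplex.mk (e ≫ f) (g ≫ m) (by simp [reassoc_of% w])).Exact := by
  have hS' : (ShortComplex.mk (e ≫ f) g (by simp [w])).Exact :=
    (exact_iff_of_epi_of_isIso_of_mono (S₁ := ShortComplex.mk (e ≫ f) g _)
      (S₂ := ShortComplex.mk f g w) ⟨e, 𝟙 _, 𝟙 _, by simp, by simp⟩).2 hS
  exact (exact_iff_of_epi_of_isIso_of_mono (S₁ := ShortComplex.mk (e ≫ f) g _)
    (S₂ := ShortComplex.mk (e ≫ f) (g ≫ m) _)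
    ⟨𝟙 _, 𝟙 _, m, by simp, by simp⟩).1 hS'

lemma ShortComplex.Exact.exists_eq_comp {X₁ X₂ X₃ : C} {f : X₁ ⟶ X₂} {g : X₂ ⟶ X₃}
    {w : f ≫ g = 0} (hS : (ShortComplex.mk f g w).Exact) [Epi g] {Z L : C} (j : X₃ ⟶ Z)
    (hj : ∀ u : X₃ ⟶ L, ∃ v, j ≫ v = u) (φ : X₂ ⟶ L) (hφ : f ≫ φ = 0) :
    ∃ v : Z ⟶ L, φ = g ≫ j ≫ v := by
  obtain ⟨v, hv⟩ := hj (hS.desc φ hφ)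
  exact ⟨v, by rw [hv]; exact (hS.g_desc φ hφ).symm⟩

lemma HomologicalComplex.exactAt_of_d_eq {ι : Type*} {c : ComplexShape ι}
    (X : HomologicalComplex C c) {i j k : ι} (hij : c.prev j = i) (hjk : c.next j = k)
    {f : X.X i ⟶ X.X j} {g : X.X j ⟶ X.X k} (hf : X.d i j = f) (hg : X.d j k = g)
    (w : f ≫ g = 0) (h : (ShortComplex.mk f g w).Exact) : X.ExactAt j := by
  subst hf hg
  exact (X.exactAt_iff' i j k hij hjk).2 h

section ExtVanishing

variable [HasExt.{t} C] {X A : C}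

lemma ProjectiveResolution.subsingleton_ext_succ_iff (P : ProjectiveResolution X) (n : ℕ) :
    Subsingleton (Abelian.Ext X A (n + 1)) ↔
      ∀ f : P.complex.X (n + 1) ⟶ A, P.complex.d (n + 2) (n + 1) ≫ f = 0 →
        ∃ g : P.complex.X n ⟶ A, P.complex.d (n + 1) n ≫ g = f := by
  constructor
  · intro _ f hf
    exact (P.extMk_eq_zero_iff f (n + 2) rfl hf n rfl).1 (Subsingleton.elim _ _)
  · intro h
    refine subsingleton_of_forall_eq 0 fun α => ?_
    obtain ⟨f, hf, rfl⟩ := P.extMk_surjective α (n + 2) rfl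
    exact (P.extMk_eq_zero_iff f (n + 2) rfl hf n rfl).2 (h f hf)

lemma ShortComplex.ShortExact.exists_f_comp_eq {S : ShortComplex C} (hS : S.ShortExact)
    [Subsingleton (Abelian.Ext S.X₃ A 1)] (u : S.X₁ ⟶ A) : ∃ v : S.X₂ ⟶ A, S.f ≫ v = u := by
  obtain ⟨x, hx⟩ := Abelian.Ext.contravariant_sequence_exact₁ hS A (Abelian.Ext.mk₀ u)
    (add_zero 1) (Subsingleton.elim _ _)
  obtain ⟨v, rfl⟩ := (Abelian.Ext.mk₀_bijective S.X₂ A).2 x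
  exact ⟨v, (Abelian.Ext.mk₀_bijective S.X₁ A).1 (by rwa [Abelian.Ext.mk₀_comp_mk₀] at hx)⟩

lemma ShortComplex.ShortExact.subsingleton_ext_X₂ {S : ShortComplex C} (hS : S.ShortExact)
    {n : ℕ} [Subsingleton (Abelian.Ext S.X₁ A n)] [Subsingleton (Abelian.Ext S.X₃ A n)] :
    Subsingleton (Abelian.Ext S.X₂ A n) := by
  refine subsingleton_of_forall_eq 0 fun x => ?_
  obtain ⟨y, rfl⟩ := Abelian.Ext.contravariant_sequence_exact₂ hS A x (Subsingleton.elim _ _)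
  rw [Subsingleton.elim y 0, Abelian.Ext.comp_zero]

end ExtVanishing

section Splice

variable {K Y : ℕ → C}

def spliceCoresolution (ι : ∀ n, K n ⟶ Y n) (π : ∀ n, Y n ⟶ K (n + 1))
    (w : ∀ n, ι n ≫ π n = 0) : CochainComplex C ℕ :=
  CochainComplex.of Y (fun n => π n ≫ ι (n + 1)) (fun n => by simp [reassoc_of% w])

@[simp]
lemma spliceCoresolution_d {ι : ∀ n, K n ⟶ Y n} {π : ∀ n, Y n ⟶ K (n + 1)}
    {w : ∀ n, ι n ≫ π n = 0} (n : ℕ) :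
    (spliceCoresolution ι π w).d n (n + 1) = π n ≫ ι (n + 1) := by
  simp [spliceCoresolution]

def spliceConnectData (ι : ∀ n, K n ⟶ Y n) (π : ∀ n, Y n ⟶ K (n + 1))
    (w : ∀ n, ι n ≫ π n = 0) (P : ProjectiveResolution (K 0)) :
    CochainComplex.ConnectData P.complex (spliceCoresolution ι π w) where
  d₀ := P.π.f 0 ≫ ι 0
  comp_d₀ := (P.complex_d_comp_π_f_zero_assoc (ι 0)).trans zero_comp
  d₀_comp := by
    have h : ι 0 ≫ (spliceCoresolution ι π w).d 0 (0 + 1) = 0 := by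
      rw [spliceCoresolution_d]
      exact ((reassoc_of% (w 0)) (ι 1)).trans zero_comp
    exact (Category.assoc _ _ _).trans ((P.π.f 0 ≫= h).trans comp_zero)

-- `P.complex.X n` sits in degree `-(n + 1)` and `Y n` in degree `n`.
abbrev completeResolution (ι : ∀ n, K n ⟶ Y n) (π : ∀ n, Y n ⟶ K (n + 1))
    (w : ∀ n, ι n ≫ π n = 0) (P : ProjectiveResolution (K 0)) : CochainComplex C ℤ :=
  (spliceConnectData ι π w P).cochainComplex

variable {ι : ∀ n, K n ⟶ Y n} {π : ∀ n, Y n ⟶ K (n + 1)} {w : ∀ n, ι n ≫ π n = 0}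

lemma completeResolution_projective [∀ n, Projective (Y n)] (P : ProjectiveResolution (K 0))
    (n : ℤ) : Projective ((completeResolution ι π w P).X n) := by
  obtain n | n := n
  · exact inferInstanceAs (Projective (Y n))
  · exact inferInstanceAs (Projective (P.complex.X n))

variable (hS : ∀ n, (ShortComplex.mk (ι n) (π n) (w n)).ShortExact)
include hS

lemma spliceCoresolution_exactAt_succ (n : ℕ) :
    (spliceCoresolution ι π w).ExactAt (n + 1) := by
  have : Epi (π n) := (hS n).epi_g
  have : Mono (ι (n + 1 + 1)) := (hS _).mono_f
  exact HomologicalComplex.exactAt_of_d_eq _ (by simp) (by simp) (spliceCoresolution_d n)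
    (spliceCoresolution_d (n + 1)) _
    ((hS (n + 1)).exact.epi_comp_comp_mono (π n) (ι (n + 1 + 1)))

lemma completeResolution_exactAt (P : ProjectiveResolution (K 0)) (n : ℤ) :
    (completeResolution ι π w P).ExactAt n := by
  obtain (_ | n) | (_ | n) := n
  · have : Mono (ι 1) := (hS 1).mono_f
    -- `P.π.f 0` lands in `((single₀ C).obj (K 0)).X 0`, which is `K 0` only up to unfolding,
    -- so its `Epi` instance has to be supplied by hand.
    exact HomologicalComplex.exactAt_of_d_eq _ (i := -1) (k := 1) (by simp) (by simp)
      (f := P.π.f 0 ≫ ι 0) rfl (spliceCoresolution_d (w := w) 0) _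
      ((hS 0).exact.epi_comp_comp_mono (P.π.f 0) (ι 1) (he := inferInstanceAs (Epi (P.π.f 0))))
  · rw [HomologicalComplex.exactAt_iff_isZero_homology,
      ((spliceConnectData ι π w P).homologyIsoPos (n + 1) (Int.ofNat (n + 1)) rfl).isZero_iff,
      ← HomologicalComplex.exactAt_iff_isZero_homology]
    exact spliceCoresolution_exactAt_succ hS n
  · exact HomologicalComplex.exactAt_of_d_eq _ (i := Int.negSucc 1) (k := 0) (by simp) (by simp)
      (f := 𝟙 _ ≫ P.complex.d 1 0) (Category.id_comp _).symm (g := P.π.f 0 ≫ ι 0) rfl _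
      (P.exact₀.epi_comp_comp_mono (𝟙 _) (ι 0) (hm := (hS 0).mono_f))
  · rw [HomologicalComplex.exactAt_iff_isZero_homology,
      ((spliceConnectData ι π w P).homologyIsoNeg (n + 1) (Int.negSucc (n + 1)) (by lia)).isZero_iff,
      ← HomologicalComplex.exactAt_iff_isZero_homology]
    exact P.complex_exactAt_succ n

lemma exists_eq_π_comp_ι_comp [HasExt.{t} C] {L : C} {m : ℕ}
    [Subsingleton (Abelian.Ext.{t} (K (m + 2)) L 1)] {X₀ : C} (e : X₀ ⟶ K m) [he : Epi e]
    (f : Y m ⟶ L) (hf : (e ≫ ι m) ≫ f = 0) : ∃ v : Y (m + 1) ⟶ L, f = (π m ≫ ι (m + 1)) ≫ v := by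
  have : Epi (π m) := (hS m).epi_g
  have hf' : ι m ≫ f = 0 := (cancel_epi e).1 (by rw [← Category.assoc, hf, comp_zero])
  obtain ⟨v, hv⟩ := (hS m).exact.exists_eq_comp (ι (m + 1))
    (hS (m + 1)).exists_f_comp_eq f hf'
  exact ⟨v, hv.trans (Category.assoc _ _ _).symm⟩

lemma completeResolution_exists_eq_d_comp [HasExt.{t} C] (P : ProjectiveResolution (K 0))
    {L : C} (hK : ∀ n, Subsingleton (Abelian.Ext.{t} (K (n + 1)) L 1))
    (hM : ∀ n, Subsingleton (Abelian.Ext.{t} (K 0) L (n + 1)))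
    {i j k : ℤ} (hij : i + 1 = j) (hjk : j + 1 = k) (f : (completeResolution ι π w P).X j ⟶ L)
    (hf : (completeResolution ι π w P).d i j ≫ f = 0) :
    ∃ g : (completeResolution ι π w P).X k ⟶ L, f = (completeResolution ι π w P).d j k ≫ g := by
  obtain (_ | j) | (_ | j) := j
  · simp only [Int.ofNat_eq_natCast] at hij hjk
    obtain rfl : i = -1 := by omega
    obtain rfl : k = 1 := by omega
    have := hK 1
    obtain ⟨v, hv⟩ := exists_eq_π_comp_ι_comp hS (P.π.f 0) f hf
      (he := inferInstanceAs (Epi (P.π.f 0)))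
    have hd : (completeResolution ι π w P).d 0 1 = π 0 ≫ ι 1 := spliceCoresolution_d (w := w) 0
    exact ⟨v, hv.trans (eq_whisker hd.symm v)⟩
  · simp only [Int.ofNat_eq_natCast] at hij hjk
    obtain rfl : i = j := by omega
    obtain rfl : k = j + 2 := by omega
    have := hK (j + 2)
    have : Epi (π j) := (hS j).epi_g
    have hd' : (completeResolution ι π w P).d j (Int.ofNat (j + 1)) = π j ≫ ι (j + 1) :=
      spliceCoresolution_d (w := w) j
    rw [hd'] at hf
    obtain ⟨v, hv⟩ := exists_eq_π_comp_ι_comp hS (π j) f hf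
    have hd : (completeResolution ι π w P).d (j + 1 : ℕ) (j + 2 : ℕ) = π (j + 1) ≫ ι (j + 2) :=
      spliceCoresolution_d (w := w) (j + 1)
    exact ⟨v, hv.trans (eq_whisker hd.symm v)⟩
  · obtain rfl : i = Int.negSucc 1 := by omega
    obtain rfl : k = 0 := by omega
    have := hK 0
    obtain ⟨v, hv⟩ := P.exact₀.exists_eq_comp (ι 0) (hS 0).exists_f_comp_eq f hf
    exact ⟨v, hv.trans (Category.assoc _ _ _).symm⟩
  · obtain rfl : i = Int.negSucc (j + 2) := by omega
    obtain rfl : k = Int.negSucc j := by omega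
    simp only [CochainComplex.ConnectData.cochainComplex_d,
      CochainComplex.ConnectData.d_negSucc] at hf ⊢
    obtain ⟨g, hg⟩ := (P.subsingleton_ext_succ_iff j).1 (hM j) f hf
    exact ⟨g, hg.symm⟩

lemma nonempty_iso_kernel_completeResolution_d (P : ProjectiveResolution (K 0)) :
    Nonempty (K 0 ≅ kernel ((completeResolution ι π w P).d 0 1)) := by
  have : Mono (ι 1) := (hS 1).mono_f
  exact ⟨IsLimit.conePointUniqueUpToIso (hS 0).fIsKernel (kernelIsKernel (π 0)) ≪≫
    (kernelCompMono (π 0) (ι 1)).symm ≪≫ kernelIsoOfEq (spliceCoresolution_d (w := w) 0).symm⟩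

end Splice

end CategoryTheory

section ModuleCat

variable {R} {X A : ModuleCat.{u} R}

lemma CategoryTheory.ProjectiveResolution.extVanish_succ_iff (P : ProjectiveResolution X)
    (n : ℕ) : extVanish R (n + 1) X A ↔
      ∀ f : P.complex.X (n + 1) ⟶ A, P.complex.d (n + 2) (n + 1) ≫ f = 0 →
        ∃ g : P.complex.X n ⟶ A, P.complex.d (n + 1) n ≫ g = f := by
  rw [extVanish, ← ModuleCat.isZero_iff_subsingleton, (P.isoExt (n + 1) A).isZero_iff,
    ← HomologicalComplex.exactAt_iff_isZero_homology,
    HomologicalComplex.exactAt_iff' _ n (n + 1) (n + 2) (by simp) (by simp),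
    ShortComplex.moduleCat_exact_iff]
  rfl

-- Both sides say that every cocycle `P_{n+1} → A` of a projective resolution is a coboundary;
-- this makes the long exact sequences of `Abelian.Ext` available for `extVanish`.
lemma extVanish_succ_iff_subsingleton_ext (n : ℕ) :
    extVanish R (n + 1) X A ↔ Subsingleton (Abelian.Ext X A (n + 1)) :=
  ((projectiveResolution X).extVanish_succ_iff n).trans
    ((projectiveResolution X).subsingleton_ext_succ_iff n).symm

end ModuleCat

theorem stmt_15_general (R : Type u) [Ring R] (𝒞 𝒲 : ModuleCat.{u} R → Prop)
    -- cotorsion pair orthogonality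
    (horth₂ : ∀ X, 𝒞 X ↔ ∀ A, 𝒲 A → extVanish R 1 X A)
    -- completeness: enough injectives and enough projectives
    (hcomp₁ : ∀ M : ModuleCat.{u} R,
      ∃ (Y X : ModuleCat.{u} R) (f : M ⟶ Y) (g : Y ⟶ X) (w : f ≫ g = 0),
        (ShortComplex.mk f g w).ShortExact ∧ 𝒲 Y ∧ 𝒞 X)
    -- hereditary
    (hher : ∀ i, 1 ≤ i → ∀ X A, 𝒞 X → 𝒲 A → extVanish R i X A)
    -- 𝒞 ∩ 𝒲 = projectives
    (hproj : ∀ X, (𝒞 X ∧ 𝒲 X) ↔ Projective X)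
    -- all level modules lie in 𝒲
    (hlev : ∀ L, IsLevel R L → 𝒲 L)
    (M : ModuleCat.{u} R) (hM : 𝒞 M) :
    IsGorACProj R M := by
  choose W Q ι π w hS hW hQ using hcomp₁
  have hext {X A : ModuleCat.{u} R} (hX : 𝒞 X) (hA : 𝒲 A) (i : ℕ) :
      Subsingleton (Abelian.Ext X A (i + 1)) :=
    (extVanish_succ_iff_subsingleton_ext i).1 (hher (i + 1) (by omega) X A hX hA)
  have hWC (X : ModuleCat.{u} R) (hX : 𝒞 X) : 𝒞 (W X) :=
    (horth₂ _).2 fun A hA =>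
      have := hext hX hA 0
      have := hext (hQ X) hA 0
      (extVanish_succ_iff_subsingleton_ext 0).2 (hS X).subsingleton_ext_X₂
  let K : ℕ → ModuleCat.{u} R := fun n => Nat.rec M (fun _ => Q) n
  have hK (n : ℕ) : 𝒞 (K n) := Nat.rec hM (fun n _ => hQ (K n)) n
  have (n : ℕ) : Projective (W (K n)) := (hproj _).1 ⟨hWC _ (hK n), hW _⟩
  have hS' (n : ℕ) : (ShortComplex.mk (ι (K n)) (π (K n)) (w (K n))).ShortExact := hS (K n)
  let P := projectiveResolution M
  refine ⟨completeResolution (fun n => ι (K n)) (fun n => π (K n)) (fun n => w (K n)) P,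
    completeResolution_projective (w := fun n => w (K n)) P, completeResolution_exactAt hS' P,
    fun L hL n f hf => ?_, nonempty_iso_kernel_completeResolution_d hS' P⟩
  exact completeResolution_exists_eq_d_comp hS' P (fun m => hext (hK (m + 1)) (hlev L hL) 0)
    (hext hM (hlev L hL)) (by omega) rfl f hf

/-- if `(𝒞, 𝒲)` is a complete hereditary cotorsion pair with
`𝒞 ∩ 𝒲` the projectives and all level modules in `𝒲`, then every `M ∈ 𝒞` is
Gorenstein AC-projective. -/
theorem stmt_15 (R : Type u) [Ring R] (𝒞 𝒲 : ModuleCat.{u} R → Prop)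
    -- cotorsion pair orthogonality
    (horth₁ : ∀ A, 𝒲 A ↔ ∀ X, 𝒞 X → extVanish R 1 X A)
    (horth₂ : ∀ X, 𝒞 X ↔ ∀ A, 𝒲 A → extVanish R 1 X A)
    -- completeness: enough injectives and enough projectives
    (hcomp₁ : ∀ M : ModuleCat.{u} R,
      ∃ (Y X : ModuleCat.{u} R) (f : M ⟶ Y) (g : Y ⟶ X) (w : f ≫ g = 0),
        (ShortComplex.mk f g w).ShortExact ∧ 𝒲 Y ∧ 𝒞 X)
    (hcomp₂ : ∀ M : ModuleCat.{u} R,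
      ∃ (Y X : ModuleCat.{u} R) (f : Y ⟶ X) (g : X ⟶ M) (w : f ≫ g = 0),
        (ShortComplex.mk f g w).ShortExact ∧ 𝒲 Y ∧ 𝒞 X)
    -- hereditary
    (hher : ∀ i, 1 ≤ i → ∀ X A, 𝒞 X → 𝒲 A → extVanish R i X A)
    -- 𝒞 ∩ 𝒲 = projectives
    (hproj : ∀ X, (𝒞 X ∧ 𝒲 X) ↔ Projective X)
    -- all level modules lie in 𝒲
    (hlev : ∀ L, IsLevel R L → 𝒲 L)
    (M : ModuleCat.{u} R) (hM : 𝒞 M) :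
    IsGorACProj R M :=
  stmt_15_general R 𝒞 𝒲 horth₂ hcomp₁ hher hproj hlev M hM

end
end

section
/- Let R be an AC-Gorenstein ring with trivial class W. If M is a Gorenstein AC-injective R-module, then Ext^1_R(W, M) = 0 for every W ∈ W; that is, GI ⊆ W^⊥. -/
/-!
Let `I` be an exact complex of injectives with `M = ker (I⁰ ⟶ I¹)` such that `Hom(A, I)` is
exact for every absolutely clean `A`. Exactness of `Hom(-, I)` passes from the middle and right
terms of a short exact sequence to the left one, because maps into the injective `Iⁿ` extend.
Walking down the cosyzygies of a finite absolutely clean coresolution of `W` shows that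
`Hom(W, I)` is exact. Computing `Ext¹(W, M)` with a projective resolution `P ⟶ W`, a cocycle
`P₁ ⟶ M` extends to `P₀ ⟶ I⁰` by injectivity, and the obstruction to this extension landing in `M`
is a cocycle `W ⟶ I¹`, which exactness of `Hom(W, I)` lets us remove.
-/

open CategoryTheory Limits

noncomputable section
universe u
variable (R : Type u) [Ring R]

section HomAcyclic

variable {C : Type*} [Category C] [Abelian C]

/-- `Hom(W, I)` is exact, with the indices written as `i + 1 = j` rather than `j - 1` so that
they can be shifted without casts. -/
def HomAcyclic (W : C) (I : CochainComplex C ℤ) : Prop :=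
  ∀ i j : ℤ, i + 1 = j → ∀ f : W ⟶ I.X j, f ≫ I.d j (j + 1) = 0 →
    ∃ g : W ⟶ I.X i, g ≫ I.d i j = f

variable {I : CochainComplex C ℤ}

lemma HomAcyclic.of_exists_sub_one {W : C}
    (h : ∀ (n : ℤ) (f : W ⟶ I.X n), f ≫ I.d n (n + 1) = 0 →
      ∃ g : W ⟶ I.X (n - 1), f = g ≫ I.d (n - 1) n) :
    HomAcyclic W I := by
  rintro i _ rfl f hf
  obtain ⟨g, rfl⟩ := h _ f hf
  exact ⟨g ≫ (I.XIsoOfEq (by simp)).hom, by simp⟩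

lemma HomAcyclic.of_isZero {W : C} (hW : IsZero W) : HomAcyclic W I :=
  fun _ _ _ _ _ => ⟨0, hW.eq_of_src _ _⟩

lemma HomAcyclic.of_shortExact [∀ n, Injective (I.X n)] {S : ShortComplex C}
    (hS : S.ShortExact) (h₂ : HomAcyclic S.X₂ I) (h₃ : HomAcyclic S.X₃ I) :
    HomAcyclic S.X₁ I := by
  rintro i j rfl f hf
  have := hS.mono_f
  have := hS.epi_g
  let h := Injective.factorThru f S.f
  have hh : S.f ≫ h = f := Injective.comp_factorThru f S.f
  let f' := hS.exact.desc (h ≫ I.d _ _) (by rw [← Category.assoc, hh, hf])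
  have hf' : S.g ≫ f' = h ≫ I.d _ _ := hS.exact.g_desc _ _
  obtain ⟨g', hg'⟩ := h₃ (i + 1) _ rfl f' (by
    rw [← cancel_epi S.g, ← Category.assoc, hf', Category.assoc,
      HomologicalComplex.d_comp_d, comp_zero, comp_zero])
  obtain ⟨g, hg⟩ := h₂ i _ rfl (h - S.g ≫ g') (by
    rw [Preadditive.sub_comp, Category.assoc, hg', hf', sub_self])
  refine ⟨S.f ≫ g, ?_⟩
  rw [Category.assoc, hg, Preadditive.comp_sub, hh, S.zero_assoc, zero_comp, sub_zero]

lemma CategoryTheory.ShortComplex.exact_kernelLift {X₁ X₂ X₃ X₄ : C} {f : X₁ ⟶ X₂} {g : X₂ ⟶ X₃}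
    {h : X₃ ⟶ X₄} (hfg : f ≫ g = 0) (hgh : g ≫ h = 0) (hf : (ShortComplex.mk f g hfg).Exact) :
    (ShortComplex.mk f (kernel.lift h g hgh) (by simp [← cancel_mono (kernel.ι h), hfg])).Exact :=
  (ShortComplex.exact_iff_of_epi_of_isIso_of_mono (S₂ := ShortComplex.mk f g hfg)
    { τ₁ := 𝟙 X₁, τ₂ := 𝟙 X₂, τ₃ := kernel.ι h }).2 hf

lemma CategoryTheory.ShortComplex.shortExact_kernelLift {X₁ X₂ X₃ X₄ : C} {f : X₁ ⟶ X₂} {g : X₂ ⟶ X₃}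
    {h : X₃ ⟶ X₄} [Mono f] (hfg : f ≫ g = 0) (hgh : g ≫ h = 0)
    (hf : (ShortComplex.mk f g hfg).Exact) (hg : (ShortComplex.mk g h hgh).Exact) :
    (ShortComplex.mk f (kernel.lift h g hgh)
      (by simp [← cancel_mono (kernel.ι h), hfg])).ShortExact where
  exact := ShortComplex.exact_kernelLift hfg hgh hf
  epi_g := hg.epi_kernelLift

lemma CochainComplex.exact_of_exactAt_succ (D : CochainComplex C ℕ) (j : ℕ)
    (hD : D.ExactAt (j + 1)) :
    (ShortComplex.mk _ _ (D.d_comp_d j (j + 1) (j + 2))).Exact :=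
  (D.exactAt_iff' j (j + 1) (j + 2) (by simp) (by simp only [CochainComplex.next]; rfl)).1 hD

lemma CochainComplex.fromSingle₀_f_zero_comp_d {W : C} {D : CochainComplex C ℕ}
    (ι : (CochainComplex.single₀ C).obj W ⟶ D) : ι.f 0 ≫ D.d 0 1 = 0 := by
  rw [ι.comm, HomologicalComplex.single_obj_d, zero_comp]

def CochainComplex.isLimitKernelForkOfQuasiIso {W : C} {D : CochainComplex C ℕ}
    (ι : (CochainComplex.single₀ C).obj W ⟶ D) [QuasiIso ι] :
    IsLimit (KernelFork.ofι (ι.f 0) (CochainComplex.fromSingle₀_f_zero_comp_d ι)) := by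
  refine IsLimit.ofIsoLimit (D.cyclesIsKernel 0 1 (by simp)) (Iso.symm ?_)
  refine Fork.ext ((HomologicalComplex.singleObjHomologySelfIso _ 0 W).symm ≪≫
    isoOfQuasiIsoAt ι 0 ≪≫ D.isoHomologyπ₀.symm) ?_
  erw [← cancel_epi (HomologicalComplex.singleObjHomologySelfIso (ComplexShape.up ℕ) 0 W).hom,
    ← cancel_epi (CochainComplex.isoHomologyπ₀ _).hom,
    ← cancel_epi (HomologicalComplex.singleObjCyclesSelfIso (ComplexShape.up ℕ) 0 W).inv]
  simp only [HomologicalComplex.isoHomologyπ_hom, single₀_obj_zero, Fork.ofι_pt,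
    Iso.trans_hom, Iso.symm_hom, isoOfQuasiIsoAt_hom, isoHomologyπ₀_inv_naturality, Fork.ι_ofι,
    Category.assoc, HomologicalComplex.cyclesMap_i, Iso.hom_inv_id_assoc,
    HomologicalComplex.isoHomologyπ_hom_inv_id_assoc,
    HomologicalComplex.homologyπ_singleObjHomologySelfIso_hom_assoc, Iso.inv_hom_id_assoc]
  erw [HomologicalComplex.singleObjCyclesSelfIso_inv_iCycles_assoc]
  exact Category.id_comp _

theorem HomAcyclic.of_quasiIso [∀ n, Injective (I.X n)] {W : C} {D : CochainComplex C ℕ}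
    (ι : (CochainComplex.single₀ C).obj W ⟶ D) [QuasiIso ι] (m : ℕ)
    (hbdd : ∀ i, m < i → IsZero (D.X i)) (hD : ∀ i, HomAcyclic (D.X i) I) :
    HomAcyclic W I := by
  have hexact (j : ℕ) : (ShortComplex.mk _ _ (D.d_comp_d j (j + 1) (j + 2))).Exact :=
    D.exact_of_exactAt_succ j ((quasiIsoAt_iff_exactAt ι (j + 1)
      (CochainComplex.exactAt_succ_single_obj _ _)).1 inferInstance)
  have hker : ∀ k j, j + k = m + 1 → HomAcyclic (kernel (D.d j (j + 1))) I := by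
    intro k
    induction k with
    | zero =>
      intro j hj
      exact .of_isZero ((hbdd j (by omega)).of_mono (kernel.ι _))
    | succ k ih =>
      intro j hj
      exact .of_shortExact (ShortComplex.shortExact_kernelLift (kernel.condition _) _
        (ShortComplex.exact_of_f_is_kernel _ (kernelIsKernel _)) (hexact j))
        (hD j) (ih (j + 1) (by omega))
  have hW := CochainComplex.isLimitKernelForkOfQuasiIso ι
  have : Mono (ι.f 0) := mono_of_isLimit_fork hW
  exact .of_shortExact (ShortComplex.shortExact_kernelLift
    (CochainComplex.fromSingle₀_f_zero_comp_d ι) (D.d_comp_d 0 1 2)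
    (ShortComplex.exact_of_f_is_kernel _ hW) (hexact 0)) (hD 0) (hker m 1 (by omega))

lemma CategoryTheory.ProjectiveResolution.exists_d_comp_eq_of_homAcyclic
    [∀ n, Injective (I.X n)] {W M : C} (P : ProjectiveResolution W) (e : M ≅ kernel (I.d 0 1))
    (hW : HomAcyclic W I) (f : P.complex.X 1 ⟶ M) (hf : P.complex.d 2 1 ≫ f = 0) :
    ∃ g : P.complex.X 0 ⟶ M, P.complex.d 1 0 ≫ g = f := by
  let i : M ⟶ I.X 0 := e.hom ≫ kernel.ι _
  have hi : i ≫ I.d 0 1 = 0 := by simp [i]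
  have hK := ShortComplex.exact_kernelLift (P.complex.d_comp_d 2 1 0)
    P.complex_d_comp_π_f_zero (P.exact_succ 0)
  have := P.exact₀.epi_kernelLift
  let φ := hK.desc (f ≫ i) (by dsimp only; rw [← Category.assoc, hf, zero_comp])
  let ψ := Injective.factorThru φ (kernel.ι (P.π.f 0))
  have hψ : P.complex.d 1 0 ≫ ψ = f ≫ i := by
    rw [← kernel.lift_ι (P.π.f 0) (P.complex.d 1 0) P.complex_d_comp_π_f_zero, Category.assoc,
      Injective.comp_factorThru]
    exact hK.g_desc _ _
  let θ : W ⟶ I.X 1 := P.exact₀.desc (ψ ≫ I.d 0 1)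
    (by rw [← Category.assoc, hψ, Category.assoc, hi, comp_zero])
  let π : P.complex.X 0 ⟶ W := P.π.f 0
  have : Epi π := inferInstanceAs (Epi (P.π.f 0))
  have hθ : π ≫ θ = ψ ≫ I.d 0 1 := P.exact₀.g_desc _ _
  obtain ⟨g₁, hg₁⟩ := hW 0 1 rfl θ (by
    rw [← cancel_epi π, ← Category.assoc, hθ, Category.assoc, I.d_comp_d, comp_zero,
      comp_zero])
  let ψ' := ψ - π ≫ g₁
  have hψ' : ψ' ≫ I.d 0 1 = 0 := by
    rw [Preadditive.sub_comp, Category.assoc, hg₁, hθ, sub_self]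
  refine ⟨kernel.lift _ ψ' hψ' ≫ e.inv, ?_⟩
  have : Mono i := mono_comp _ _
  have hπ : P.complex.d 1 0 ≫ π = 0 := P.complex_d_comp_π_f_zero
  rw [← cancel_mono i, Category.assoc, Category.assoc, e.inv_hom_id_assoc, kernel.lift_ι,
    Preadditive.comp_sub, hψ, reassoc_of% hπ, zero_comp, sub_zero]

lemma isZero_ext_one_of_homAcyclic [EnoughProjectives C] [∀ n, Injective (I.X n)] {W M : C}
    (e : M ≅ kernel (I.d 0 1)) (hW : HomAcyclic W I) :
    IsZero (((Ext ℤ C 1).obj (Opposite.op W)).obj M) := by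
  let P := projectiveResolution W
  refine IsZero.of_iso ?_ (P.isoExt 1 M)
  rw [← HomologicalComplex.exactAt_iff_isZero_homology,
    HomologicalComplex.exactAt_iff' _ 0 1 2 (by simp) (by simp only [CochainComplex.next]; rfl),
    ShortComplex.moduleCat_exact_iff]
  exact fun f hf => P.exists_d_comp_eq_of_homAcyclic e hW f hf

end HomAcyclic

lemma exists_hasCoresLen_of_ad_ne_top {R : Type u} [Ring R] {W : ModuleCat.{u} R}
    (hW : ad R W ≠ ⊤) : ∃ m, HasCoresLen R (IsAbsClean R) m W := by
  by_contra! h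
  refine hW (sInf_eq_top.2 ?_)
  rintro _ ⟨m, -, hm⟩
  exact absurd hm (h m)

theorem stmt_16_general (R : Type u) [Ring R] (d : ℕ)
    (M : ModuleCat.{u} R) (hM : IsGorACInj R M) :
    ∀ W : ModuleCat.{u} R, ad R W ≤ (d : ℕ∞) → extVanish R 1 W M := by
  intro W hW
  obtain ⟨I, hinj, -, hlift, ⟨e⟩⟩ := hM
  obtain ⟨m, D, ι, hι, hD, hbdd⟩ :=
    exists_hasCoresLen_of_ad_ne_top (ne_top_of_le_ne_top (ENat.natCast_ne_top d) hW)
  have hAC (A : ModuleCat.{u} R) (hA : IsAbsClean R A) : HomAcyclic A I :=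
    .of_exists_sub_one (hlift A hA)
  have hWI : HomAcyclic W I := .of_quasiIso ι m hbdd fun i =>
    if hi : i ≤ m then hAC _ (hD i hi) else .of_isZero (hbdd i (by omega))
  exact ModuleCat.subsingleton_of_isZero (isZero_ext_one_of_homAcyclic e hWI)

/-- over an AC-Gorenstein ring of dimension `d`, every Gorenstein
AC-injective module `M` satisfies `Ext^1(W, M) = 0` for every trivial module `W`. -/
theorem stmt_16 (R : Type u) [Ring R] (d : ℕ) (h : IsACGor R d)
    (M : ModuleCat.{u} R) (hM : IsGorACInj R M) :
    ∀ W : ModuleCat.{u} R, ad R W ≤ (d : ℕ∞) → extVanish R 1 W M :=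
  stmt_16_general R d M hM
end
end
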